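/- Let E and E₁ be finite-dimensional real inner product spaces, A : E → E₁ a linear map with adjoint A*, f ∈ E₁, λ > 0, and J̃ : E → ℝ a ν-strongly convex function for some ν > 0. Let v̄ be the unique minimizer of J̃ on the affine space {v ∈ E : Av = f}, and let q̄ ∈ E₁ be such that A*q̄ is a subgradient of J̃ at v̄. Let q_0 ∈ E₁ be arbitrary and suppose, for every k ≥ 1, v_k minimizes the function v ↦ J̃(v) − ⟨q_{k-1}, Av⟩ + λ‖Av − f‖² over E, and q_k = q_{k-1} + 2λ(f − A v_k). Then for all k ≥ 1 one has ‖v_k − v̄‖² ≤ (1/ν)‖q_0 − q̄‖·‖A v_k − f‖. -/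

import Mathlib

/-!
Both the saddle point `(v̄, q̄)` and every iterate `(v_k, q_k)` satisfy a strong subgradient
inequality: `A* q̄` is a subgradient of `J` at `v̄`, and the optimality of `v_k` makes `A* q_k` a
subgradient of `J` at `v_k`. For a `ν`-strongly convex `J` any subgradient comes with the quadratic
term `ν/2 ‖w - x‖²`, so adding the two inequalities gives
`ν ‖v_k - v̄‖² ≤ ⟪q_k - q̄, A v_k - f⟫`. This inner product is nonnegative, so the multiplier update
`q_{k-1} - q̄ = (q_k - q̄) + 2λ (A v_k - f)` makes `‖q_k - q̄‖` nonincreasing, and Cauchy–Schwarz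
finishes the estimate.
-/

open RealInnerProductSpace Set Filter Topology

section QuadraticMinorant

variable {E : Type*} [NormedAddCommGroup E] [InnerProductSpace ℝ E]

/-- For `ν = 0` this says that `g` is a subgradient of `J` at `x`; `ν` may be negative. -/
def HasQuadraticMinorant (ν : ℝ) (J : E → ℝ) (x g : E) : Prop :=
  ∀ w, J x + ⟪g, w - x⟫ + ν / 2 * ‖w - x‖ ^ 2 ≤ J w

/-- Convexity absorbs a quadratic error term, since it vanishes to second order along segments. -/
theorem ConvexOn.hasQuadraticMinorant_zero {h : E → ℝ} (hh : ConvexOn ℝ univ h) {μ : ℝ} {x g : E}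
    (hg : HasQuadraticMinorant μ h x g) : HasQuadraticMinorant 0 h x g := by
  intro w
  set d := w - x
  have hsegment : ∀ t : ℝ, 0 < t → t ≤ 1 → h x + ⟪g, d⟫ - h w ≤ t * (-μ / 2 * ‖d‖ ^ 2) := by
    intro t ht0 ht1
    have hconv := hh.2 (mem_univ x) (mem_univ w) (sub_nonneg.2 ht1) ht0.le (by ring)
    have hmin := hg ((1 - t) • x + t • w)
    have hpoint : (1 - t) • x + t • w - x = t • d := by simp only [d]; module
    rw [hpoint, real_inner_smul_right, norm_smul, mul_pow, Real.norm_of_nonneg ht0.le] at hmin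
    simp only [smul_eq_mul] at hconv
    have : t * (h x + ⟪g, d⟫ - h w) ≤ t * (t * (-μ / 2 * ‖d‖ ^ 2)) := by linarith
    exact le_of_mul_le_mul_left this ht0
  have hlim : Tendsto (fun t : ℝ => t * (-μ / 2 * ‖d‖ ^ 2)) (𝓝[>] 0) (𝓝 0) :=
    ((continuous_id.mul continuous_const).tendsto' (0 : ℝ) 0 (zero_mul _)).mono_left
      nhdsWithin_le_nhds
  have hgap : h x + ⟪g, d⟫ - h w ≤ 0 :=
    ge_of_tendsto hlim <| by
      filter_upwards [Ioc_mem_nhdsGT zero_lt_one] with t ht using hsegment t ht.1 ht.2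
  rw [zero_div, zero_mul, add_zero]
  linarith

theorem StrongConvexOn.hasQuadraticMinorant {J : E → ℝ} {ν μ : ℝ} (hJ : StrongConvexOn univ ν J)
    {x g : E} (hg : HasQuadraticMinorant μ J x g) : HasQuadraticMinorant ν J x g := by
  have hnorm (w : E) : ‖w‖ ^ 2 = ‖x‖ ^ 2 + 2 * ⟪x, w - x⟫ + ‖w - x‖ ^ 2 := by
    rw [← norm_add_sq_real, add_sub_cancel]
  have hconvex := (strongConvexOn_iff_convex.1 hJ).hasQuadraticMinorant_zero
    (μ := μ - ν) (x := x) (g := g - ν • x) fun w => by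
      have := hg w
      simp only [inner_sub_left, real_inner_smul_left, hnorm w]
      linarith
  intro w
  have := hconvex w
  simp only [inner_sub_left, real_inner_smul_left, hnorm w] at this
  linarith

theorem HasQuadraticMinorant.mul_norm_sub_sq_le_inner {J : E → ℝ} {ν : ℝ} {x y g g' : E}
    (hx : HasQuadraticMinorant ν J x g) (hy : HasQuadraticMinorant ν J y g') :
    ν * ‖x - y‖ ^ 2 ≤ ⟪g - g', x - y⟫ := by
  have h₁ := hx y
  have h₂ := hy x
  rw [norm_sub_rev] at h₁
  rw [inner_sub_left, ← neg_sub x y, inner_neg_right] at *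
  linarith

theorem norm_le_norm_add_of_inner_nonneg {a b : E} (hab : 0 ≤ ⟪a, b⟫) : ‖a‖ ≤ ‖a + b‖ := by
  rw [← pow_le_pow_iff_left₀ (norm_nonneg _) (norm_nonneg _) two_ne_zero, norm_add_sq_real]
  nlinarith [sq_nonneg ‖b‖]

end QuadraticMinorant

section AugmentedLagrangian

variable {E F : Type*} [NormedAddCommGroup E] [InnerProductSpace ℝ E] [FiniteDimensional ℝ E]
  [NormedAddCommGroup F] [InnerProductSpace ℝ F] [FiniteDimensional ℝ F]

/-- The negative modulus comes from the curvature `λ ‖A (w - x)‖²` of the penalty term. -/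
theorem hasQuadraticMinorant_of_augmentedLagrangian_le {J : E → ℝ} (A : E →ₗ[ℝ] F) (f p : F)
    {lam : ℝ} (hlam : 0 ≤ lam) {x : E}
    (hx : ∀ w, J x - ⟪p, A x⟫ + lam * ‖A x - f‖ ^ 2 ≤ J w - ⟪p, A w⟫ + lam * ‖A w - f‖ ^ 2) :
    HasQuadraticMinorant (-2 * lam * ‖LinearMap.toContinuousLinearMap A‖ ^ 2) J x
      (LinearMap.adjoint A (p + (2 * lam) • (f - A x))) := by
  intro w
  have hopNorm : ‖A (w - x)‖ ≤ ‖LinearMap.toContinuousLinearMap A‖ * ‖w - x‖ :=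
    (LinearMap.toContinuousLinearMap A).le_opNorm (w - x)
  have hpenalty : ‖A w - f‖ ^ 2 = ‖A x - f‖ ^ 2 + 2 * ⟪A x - f, A (w - x)⟫ + ‖A (w - x)‖ ^ 2 := by
    rw [← norm_add_sq_real, map_sub]; congr 2; abel
  have hmult : ⟪p, A w⟫ = ⟪p, A x⟫ + ⟪p, A (w - x)⟫ := by
    rw [← inner_add_right, map_sub, add_sub_cancel]
  have hsq : ‖A (w - x)‖ ^ 2 ≤ ‖LinearMap.toContinuousLinearMap A‖ ^ 2 * ‖w - x‖ ^ 2 := by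
    rw [← mul_pow]; exact pow_le_pow_left₀ (norm_nonneg _) hopNorm 2
  have hstep := hx w
  rw [hpenalty, hmult] at hstep
  have := mul_le_mul_of_nonneg_left hsq hlam
  rw [LinearMap.adjoint_inner_left, inner_add_left, real_inner_smul_left, ← neg_sub (A x) f,
    inner_neg_left]
  linarith

end AugmentedLagrangian

theorem statement2 {E E₁ : Type*}
    [NormedAddCommGroup E] [InnerProductSpace ℝ E] [FiniteDimensional ℝ E]
    [NormedAddCommGroup E₁] [InnerProductSpace ℝ E₁] [FiniteDimensional ℝ E₁]
    (A : E →ₗ[ℝ] E₁) (f : E₁) (lam : ℝ) (hlam : 0 < lam)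
    (ν : ℝ) (hν : 0 < ν) (J : E → ℝ)
    (hsc : ConvexOn ℝ Set.univ (fun v => J v - ν / 2 * ‖v‖ ^ 2))
    (vbar : E) (hvbarf : A vbar = f)
    (qbar : E₁)
    (hqbar : ∀ w, J vbar + ⟪(LinearMap.adjoint A) qbar, w - vbar⟫ ≤ J w)
    (v : ℕ → E) (q : ℕ → E₁)
    (hmin : ∀ k : ℕ, ∀ w,
      J (v (k + 1)) - ⟪q k, A (v (k + 1))⟫ + lam * ‖A (v (k + 1)) - f‖ ^ 2 ≤
        J w - ⟪q k, A w⟫ + lam * ‖A w - f‖ ^ 2)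
    (hq : ∀ k : ℕ, q (k + 1) = q k + (2 * lam) • (f - A (v (k + 1)))) :
    ∀ k : ℕ, ‖v (k + 1) - vbar‖ ^ 2 ≤ 1 / ν * ‖q 0 - qbar‖ * ‖A (v (k + 1)) - f‖ := by
  have hJ : StrongConvexOn univ ν J := strongConvexOn_iff_convex.2 hsc
  have hsaddle : HasQuadraticMinorant ν J vbar (LinearMap.adjoint A qbar) :=
    hJ.hasQuadraticMinorant (μ := 0) fun w => by simpa using hqbar w
  have hiterate (k : ℕ) : HasQuadraticMinorant ν J (v (k + 1)) (LinearMap.adjoint A (q (k + 1))) :=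
    hq k ▸ hJ.hasQuadraticMinorant
      (hasQuadraticMinorant_of_augmentedLagrangian_le A f (q k) hlam.le (hmin k))
  have hgap (k : ℕ) : ν * ‖v (k + 1) - vbar‖ ^ 2 ≤ ⟪q (k + 1) - qbar, A (v (k + 1)) - f⟫ := by
    have := (hiterate k).mul_norm_sub_sq_le_inner hsaddle
    rwa [← map_sub, LinearMap.adjoint_inner_left, map_sub, hvbarf] at this
  have hdual : Antitone fun k => ‖q k - qbar‖ := antitone_nat_of_succ_le fun k => by
    have hstep : q k - qbar = (q (k + 1) - qbar) + (2 * lam) • (A (v (k + 1)) - f) := by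
      rw [hq k]; module
    rw [hstep]
    refine norm_le_norm_add_of_inner_nonneg ?_
    rw [real_inner_smul_right]
    exact mul_nonneg (by positivity) ((by positivity : 0 ≤ ν * _).trans (hgap k))
  intro k
  rw [one_div_mul_eq_div, div_mul_eq_mul_div, le_div_iff₀ hν, mul_comm]
  calc ν * ‖v (k + 1) - vbar‖ ^ 2 ≤ ⟪q (k + 1) - qbar, A (v (k + 1)) - f⟫ := hgap k
    _ ≤ ‖q (k + 1) - qbar‖ * ‖A (v (k + 1)) - f‖ := real_inner_le_norm _ _
    _ ≤ ‖q 0 - qbar‖ * ‖A (v (k + 1)) - f‖ := by gcongr; exact hdual (Nat.zero_le _)
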